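/- (Generalized Weighted Sum Inequality) For all fixed integers n > 1 and r > 1 there exists a real number x₀ such that for all real x ≥ x₀, the function 𝒩ᵣ(x) = (Σ_{k=1}^{n} π(x/k))^r − (ex/log x)·(Σ_{k=1}^{n} π(x/(ek)))^r + (Σ_{k=1}^{n} π(x/(e²k)))^r satisfies 𝒩ᵣ(x) < 0. -/

import Mathlib

/-!
Chebyshev's bound `π(y) ≫ y / log y` makes the middle sum, which contains the term `π(x / e)`,
at least of order `x / log x`, so the middle term of `𝒩ᵣ(x)` is `≫ x ^ (r + 1) / (log x) ^ (r + 1)`.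
The trivial bound `π(y) ≤ y` makes the two outer terms `O(x ^ r)`, and `(log x) ^ (r + 1) = o(x)`.
-/

open Real Finset

/-- The prime counting function `π(x)`: the number of primes `p ≤ x`. -/
noncomputable def primePi (x : ℝ) : ℝ := Nat.primeCounting ⌊x⌋₊

/-- The second Chebyshev function `ψ(x) = ∑_{n ≤ x} Λ(n)`. -/
noncomputable def chebyshevPsi (x : ℝ) : ℝ :=
  ∑ n ∈ Finset.Iic ⌊x⌋₊, ArithmeticFunction.vonMangoldt n

open Filter Chebyshev

lemma primePi_nonneg (y : ℝ) : 0 ≤ primePi y := Nat.cast_nonneg _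

lemma primePi_le_self {y : ℝ} (hy : 0 ≤ y) : primePi y ≤ y := by
  have h : Nat.primeCounting ⌊y⌋₊ ≤ ⌊y⌋₊ := by
    rw [← Nat.primesLE_card_eq_primeCounting, Nat.primesLE_eq_filter_Icc_one]
    exact (card_filter_le _ _).trans (by simp)
  exact (Nat.cast_le.mpr h).trans (Nat.floor_le hy)

lemma eventually_le_log_mul_primePi : ∀ᶠ y in atTop, y ≤ 4 * log y * primePi y := by
  have hlog : ∀ᶠ y : ℝ in atTop, log (y + 2) ≤ 1 / 4 * (y + 2) := by
    filter_upwards [(isLittleO_log_id_atTop.comp_tendsto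
      (tendsto_atTop_add_const_right atTop 2 tendsto_id)).bound (c := 1 / 4) (by norm_num),
      eventually_ge_atTop 0] with y hy hy0
    simpa [abs_of_nonneg (by linarith : 0 ≤ y + 2)] using (le_abs_self _).trans hy
  filter_upwards [hlog, eventually_ge_atTop 7] with y hlog hy
  have hψ := (psi_ge' (by linarith : 0 ≤ y)).trans (psi_le_primeCounting_mul_log' y)
  have hlog2 := mul_le_mul_of_nonneg_left log_two_gt_d9.le (by linarith : 0 ≤ y - 1)
  unfold primePi
  nlinarith

lemma eventually_const_mul_pow_lt (a : ℝ) {b : ℝ} (hb : 0 < b) (r : ℕ) :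
    ∀ᶠ x in atTop, a * x ^ r < x / log x * (b * x / log x) ^ r := by
  have hε : 0 < b ^ r / (|a| + 1) := by positivity
  filter_upwards [(isLittleO_pow_log_id_atTop (n := r + 1)).bound hε, eventually_gt_atTop 1]
    with x hbound hx
  have hL : 0 < log x := log_pos hx
  have hx0 : 0 < x := by linarith
  have hbound : (|a| + 1) * log x ^ (r + 1) ≤ b ^ r * x := by
    rw [norm_of_nonneg (by positivity), id, norm_of_nonneg hx0.le] at hbound
    rwa [div_mul_eq_mul_div, le_div_iff₀' (by positivity)] at hbound
  have hrhs : x / log x * (b * x / log x) ^ r = b ^ r * x ^ (r + 1) / log x ^ (r + 1) := by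
    rw [div_pow]
    field_simp
    ring
  rw [hrhs, lt_div_iff₀ (by positivity)]
  calc a * x ^ r * log x ^ (r + 1) < x ^ r * ((|a| + 1) * log x ^ (r + 1)) := by
        nlinarith [le_abs_self a, mul_pos (pow_pos hx0 r) (pow_pos hL (r + 1))]
    _ ≤ x ^ r * (b ^ r * x) := by gcongr
    _ = b ^ r * x ^ (r + 1) := by ring

section ScaledSums

variable {n : ℕ} {c x : ℝ}

lemma sum_primePi_div_le (hc : 1 ≤ c) (hx : 0 ≤ x) :
    ∑ k ∈ Icc 1 n, primePi (x / (c * k)) ≤ n * x := by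
  calc ∑ k ∈ Icc 1 n, primePi (x / (c * k)) ≤ ∑ _k ∈ Icc 1 n, x := sum_le_sum fun k hk => ?_
    _ = n * x := by simp
  have hk : (1 : ℝ) ≤ k := by exact_mod_cast (mem_Icc.mp hk).1
  exact (primePi_le_self (by positivity)).trans
    (div_le_self hx (one_le_mul_of_one_le_of_one_le hc hk))

lemma sum_primePi_div_pow_le (r : ℕ) (hc : 1 ≤ c) (hx : 0 ≤ x) :
    (∑ k ∈ Icc 1 n, primePi (x / (c * k))) ^ r ≤ n ^ r * x ^ r :=
  (pow_le_pow_left₀ (sum_nonneg fun _ _ => primePi_nonneg _) (sum_primePi_div_le hc hx) r).trans_eq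
    (mul_pow _ _ _)

lemma primePi_div_le_sum (hn : 1 ≤ n) (c x : ℝ) :
    primePi (x / c) ≤ ∑ k ∈ Icc 1 n, primePi (x / (c * k)) := by
  simpa using single_le_sum (f := fun k : ℕ => primePi (x / (c * k)))
    (fun _ _ => primePi_nonneg _) (mem_Icc.mpr ⟨le_rfl, hn⟩)

lemma eventually_div_log_le_sum_primePi_div (hn : 1 ≤ n) (hc : 1 ≤ c) :
    ∀ᶠ x in atTop, 1 / (4 * c) * x / log x ≤ ∑ k ∈ Icc 1 n, primePi (x / (c * k)) := by
  have hc0 : 0 < c := by linarith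
  filter_upwards [eventually_gt_atTop 1,
    (tendsto_id.atTop_div_const hc0).eventually eventually_le_log_mul_primePi] with x hx hcheb
  simp only [id] at hcheb
  refine le_trans ?_ (primePi_div_le_sum hn c x)
  have hL : 0 < log x := log_pos hx
  have hlog : log (x / c) ≤ log x := log_le_log (by positivity) (div_le_self (by linarith) hc)
  have hcheb' : x / c ≤ 4 * log x * primePi (x / c) :=
    hcheb.trans (by gcongr; exact primePi_nonneg _)
  rw [div_le_iff₀' hc0] at hcheb'
  rw [div_le_iff₀ hL, one_div_mul_eq_div, div_le_iff₀ (by positivity)]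
  linarith

end ScaledSums

theorem stmt19_general (n r : ℕ) (hn : 1 < n) :
    ∃ x₀ : ℝ, ∀ x ≥ x₀,
      (∑ k ∈ Finset.Icc 1 n, primePi (x / (k : ℝ))) ^ r -
            (Real.exp 1 * x / Real.log x) * (∑ k ∈ Finset.Icc 1 n, primePi (x / (Real.exp 1 * (k : ℝ)))) ^ r +
          (∑ k ∈ Finset.Icc 1 n, primePi (x / (Real.exp 1 ^ 2 * (k : ℝ)))) ^ r < 0 := by
  rw [← eventually_atTop]
  have he : 1 ≤ exp 1 := one_le_exp zero_le_one
  filter_upwards [eventually_gt_atTop 1, eventually_div_log_le_sum_primePi_div hn.le he,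
    eventually_const_mul_pow_lt (2 * n ^ r) (b := 1 / (4 * exp 1)) (by positivity) r]
    with x hx hB hgrowth
  have hx0 : 0 ≤ x := by linarith
  have hA := sum_primePi_div_pow_le (n := n) r le_rfl hx0
  simp only [one_mul] at hA
  have hC := sum_primePi_div_pow_le (n := n) r (one_le_pow₀ he (n := 2)) hx0
  have hM : x / log x * (1 / (4 * exp 1) * x / log x) ^ r ≤
      exp 1 * x / log x * (∑ k ∈ Icc 1 n, primePi (x / (exp 1 * k))) ^ r := by
    have := log_pos hx
    gcongr
    exact le_mul_of_one_le_left hx0 he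
  linarith

theorem stmt19 (n r : ℕ) (hn : 1 < n) (hr : 1 < r) :
    ∃ x₀ : ℝ, ∀ x ≥ x₀,
      (∑ k ∈ Finset.Icc 1 n, primePi (x / (k : ℝ))) ^ r -
            (Real.exp 1 * x / Real.log x) * (∑ k ∈ Finset.Icc 1 n, primePi (x / (Real.exp 1 * (k : ℝ)))) ^ r +
          (∑ k ∈ Finset.Icc 1 n, primePi (x / (Real.exp 1 ^ 2 * (k : ℝ)))) ^ r < 0 :=
  stmt19_general n r hn
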